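/- Let ρ and σ be density matrices on ℂⁿ with σ positive definite. Then S(ρ|σ) ≤ D(P_ρ|P_σ)(n-1) + log₂ n, where P_ρ and P_σ are the distributions obtained by measuring ρ and σ in an eigenbasis of σ. -/

import Mathlib

open Finset
open scoped ComplexOrder

/-- The base-2 logarithm of a Hermitian matrix via the spectral theorem, with
the convention `log₂ 0 = 0` on eigenvalues. -/
noncomputable def matLogb {n : ℕ} (A : Matrix (Fin n) (Fin n) ℂ)
    (hA : A.IsHermitian) : Matrix (Fin n) (Fin n) ℂ :=
  (hA.eigenvectorUnitary : Matrix (Fin n) (Fin n) ℂ) *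
    Matrix.diagonal (fun i => (Real.logb 2 (hA.eigenvalues i) : ℂ)) *
    star (hA.eigenvectorUnitary : Matrix (Fin n) (Fin n) ℂ)

/-!
Measuring in the eigenbasis of `σ` turns `Tr ρ log₂ σ` into the cross entropy
`∑ P_ρ log₂ P_σ`, while `Tr ρ log₂ ρ ≤ 0`. The negated cross entropy is the relative entropy
`∑ P_ρ log₂ (P_ρ / P_σ)` plus the Shannon entropy of `P_ρ`, which is at most `log₂ n` by Jensen.
Each term `P_ρ i log₂ (P_ρ i / P_σ i)` is the divergence functional at `{i}`, hence at most `D`,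
and as both distributions have mass 1 some term is nonpositive; so the relative entropy is at
most `(n - 1) D`.
-/

open Real

section Classical

variable {ι : Type*} [Fintype ι]

theorem sum_le_card_sub_one_mul {f : ι → ℝ} {D : ℝ} (hf : ∀ i, f i ≤ D) {j : ι}
    (hj : f j ≤ 0) : ∑ i, f i ≤ (Fintype.card ι - 1) * D := by
  classical
  rw [← add_sum_erase _ _ (mem_univ j)]
  calc f j + ∑ i ∈ univ.erase j, f i ≤ 0 + ∑ _i ∈ univ.erase j, D :=
        add_le_add hj (sum_le_sum fun i _ => hf i)
    _ = (Fintype.card ι - 1) * D := by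
        rw [sum_const, nsmul_eq_mul, cast_card_erase_of_mem (mem_univ j), card_univ, zero_add]

noncomputable def classicalDivergence (P Q : ι → ℝ) : ℝ :=
  ⨆ S : Finset ι, (∑ i ∈ S, P i) * logb 2 ((∑ i ∈ S, P i) / (∑ i ∈ S, Q i))

theorem le_classicalDivergence (P Q : ι → ℝ) (S : Finset ι) :
    (∑ i ∈ S, P i) * logb 2 ((∑ i ∈ S, P i) / (∑ i ∈ S, Q i)) ≤ classicalDivergence P Q :=
  Finite.le_ciSup
    (fun S : Finset ι => (∑ i ∈ S, P i) * logb 2 ((∑ i ∈ S, P i) / (∑ i ∈ S, Q i))) S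

theorem mul_logb_div_le_classicalDivergence (P Q : ι → ℝ) (i : ι) :
    P i * logb 2 (P i / Q i) ≤ classicalDivergence P Q := by
  simpa using le_classicalDivergence P Q {i}

theorem exists_mul_logb_div_nonpos [Nonempty ι] {P Q : ι → ℝ} (hP : 0 ≤ P) (hQ : 0 ≤ Q)
    (hPQ : ∑ i, P i ≤ ∑ i, Q i) : ∃ i, P i * logb 2 (P i / Q i) ≤ 0 := by
  obtain ⟨i, -, hi⟩ := exists_le_of_sum_le univ_nonempty hPQ
  exact ⟨i, mul_nonpos_of_nonneg_of_nonpos (hP i)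
    (logb_nonpos one_lt_two (div_nonneg (hP i) (hQ i)) (div_le_one_of_le₀ hi (hQ i)))⟩

theorem sum_mul_logb_div_le_classicalDivergence_mul [Nonempty ι] {P Q : ι → ℝ} (hP : 0 ≤ P)
    (hQ : 0 ≤ Q) (hPQ : ∑ i, P i ≤ ∑ i, Q i) :
    ∑ i, P i * logb 2 (P i / Q i) ≤ classicalDivergence P Q * (Fintype.card ι - 1) := by
  obtain ⟨j, hj⟩ := exists_mul_logb_div_nonpos hP hQ hPQ
  rw [mul_comm]
  exact sum_le_card_sub_one_mul (mul_logb_div_le_classicalDivergence P Q) hj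

theorem sum_negMulLog_le_log_card {P : ι → ℝ} (hP : 0 ≤ P) (hP1 : ∑ i, P i = 1) :
    ∑ i, negMulLog (P i) ≤ log (Fintype.card ι) := by
  have hcard : (0 : ℝ) < Fintype.card ι := by
    rcases isEmpty_or_nonempty ι with h | h
    · simp at hP1
    · exact_mod_cast Fintype.card_pos
  have hjensen := concaveOn_negMulLog.le_map_sum (t := univ)
    (w := fun _ => (Fintype.card ι : ℝ)⁻¹) (p := P) (fun _ _ => by positivity)
    (by simp [hcard.ne']) (fun i _ => hP i)
  simp only [smul_eq_mul, ← mul_sum, hP1, mul_one] at hjensen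
  rw [negMulLog, log_inv, neg_mul_neg] at hjensen
  exact le_of_mul_le_mul_left hjensen (inv_pos.2 hcard)

theorem neg_logb_card_le_sum_mul_logb {P : ι → ℝ} (hP : 0 ≤ P) (hP1 : ∑ i, P i = 1) :
    -logb 2 (Fintype.card ι) ≤ ∑ i, P i * logb 2 (P i) := by
  have h := sum_negMulLog_le_log_card hP hP1
  simp only [negMulLog, neg_mul, sum_neg_distrib] at h
  simp only [logb, ← mul_div_assoc, ← sum_div, ← neg_div]
  exact div_le_div_of_nonneg_right (by linarith) (log_pos one_lt_two).le

theorem sum_mul_logb_self_nonpos {P : ι → ℝ} (hP : 0 ≤ P) (hP1 : ∑ i, P i = 1) :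
    ∑ i, P i * logb 2 (P i) ≤ 0 := by
  refine sum_nonpos fun i _ => mul_nonpos_of_nonneg_of_nonpos (hP i) ?_
  exact logb_nonpos one_lt_two (hP i) (hP1 ▸ single_le_sum (fun j _ => hP j) (mem_univ i))

theorem sum_mul_logb_div {P Q : ι → ℝ} (hQ : ∀ i, Q i ≠ 0) :
    ∑ i, P i * logb 2 (P i / Q i) = ∑ i, P i * logb 2 (P i) - ∑ i, P i * logb 2 (Q i) := by
  rw [← sum_sub_distrib]
  refine sum_congr rfl fun i _ => ?_
  rcases eq_or_ne (P i) 0 with h | h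
  · simp [h]
  · rw [logb_div h (hQ i)]; ring

theorem neg_sum_mul_logb_le_classicalDivergence_mul_add {P Q : ι → ℝ} (hP : 0 ≤ P)
    (hP1 : ∑ i, P i = 1) (hQ : ∀ i, 0 < Q i) (hQ1 : ∑ i, Q i = 1) :
    -∑ i, P i * logb 2 (Q i) ≤
      classicalDivergence P Q * (Fintype.card ι - 1) + logb 2 (Fintype.card ι) := by
  have : Nonempty ι := by
    by_contra h
    simp [not_nonempty_iff.mp h] at hP1
  have hrel := sum_mul_logb_div_le_classicalDivergence_mul hP (fun i => (hQ i).le)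
    (hP1.trans hQ1.symm).le
  rw [sum_mul_logb_div fun i => (hQ i).ne'] at hrel
  linarith [neg_logb_card_le_sum_mul_logb hP hP1]

end Classical

namespace Matrix

variable {m : Type*} [Fintype m]

theorem re_trace_mul_conj_diagonal [DecidableEq m] (A U : Matrix m m ℂ) (d : m → ℝ) :
    (A * (U * diagonal (fun i => (d i : ℂ)) * star U)).trace.re =
      ∑ i, ((star U * A * U) i i).re * d i := by
  rw [← mul_assoc, ← mul_assoc, trace_mul_comm, ← mul_assoc, ← mul_assoc, trace, Complex.re_sum]
  refine sum_congr rfl fun i _ => ?_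
  rw [diag_apply, mul_diagonal, Complex.re_mul_ofReal]

theorem sum_re_diag_star_mul_mul [DecidableEq m] (A : Matrix m m ℂ) {U : Matrix m m ℂ}
    (hU : U ∈ unitaryGroup m ℂ) :
    ∑ i, ((star U * A * U) i i).re = A.trace.re := by
  have htrace : (star U * A * U).trace = A.trace := by
    rw [trace_mul_cycle, mem_unitaryGroup_iff.mp hU, one_mul]
  rw [← htrace, trace, Complex.re_sum]
  rfl

theorem PosSemidef.re_diag_star_mul_mul_nonneg {A : Matrix m m ℂ} (hA : A.PosSemidef)
    (U : Matrix m m ℂ) (i : m) :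
    0 ≤ ((star U * A * U) i i).re :=
  (Complex.le_def.mp (hA.conjTranspose_mul_mul_same U).diag_nonneg).1

theorem IsHermitian.sum_eigenvalues_eq_re_trace [DecidableEq m] {A : Matrix m m ℂ}
    (hA : A.IsHermitian) :
    ∑ i, hA.eigenvalues i = A.trace.re := by
  simp [hA.trace_eq_sum_eigenvalues]

theorem IsHermitian.star_eigenvectorUnitary_mul_mul [DecidableEq m] {A : Matrix m m ℂ}
    (hA : A.IsHermitian) :
    star (hA.eigenvectorUnitary : Matrix m m ℂ) * A * hA.eigenvectorUnitary =
      diagonal (fun i => (hA.eigenvalues i : ℂ)) := by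
  simpa [Function.comp_def] using hA.conjStarAlgAut_star_eigenvectorUnitary

end Matrix

section

variable {n : ℕ}

theorem re_trace_mul_matLogb (A : Matrix (Fin n) (Fin n) ℂ) {B : Matrix (Fin n) (Fin n) ℂ}
    (hB : B.IsHermitian) :
    (A * matLogb B hB).trace.re = ∑ i,
      ((star (hB.eigenvectorUnitary : Matrix (Fin n) (Fin n) ℂ) * A * hB.eigenvectorUnitary)
        i i).re * logb 2 (hB.eigenvalues i) :=
  Matrix.re_trace_mul_conj_diagonal _ _ _

theorem re_trace_mul_matLogb_self {A : Matrix (Fin n) (Fin n) ℂ} (hA : A.IsHermitian) :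
    (A * matLogb A hA).trace.re = ∑ i, hA.eigenvalues i * logb 2 (hA.eigenvalues i) := by
  simp [re_trace_mul_matLogb, hA.star_eigenvectorUnitary_mul_mul]

end

/-- Let `ρ`, `σ` be density matrices on `ℂⁿ` with `σ` positive definite, and
let `P_ρ i = ⟨eᵢ|ρ|eᵢ⟩`, `P_σ i = ⟨eᵢ|σ|eᵢ⟩` be the distributions obtained by
measuring `ρ` and `σ` in the eigenbasis `{eᵢ}` of `σ` (so `P_σ` consists of
the eigenvalues of `σ`). Then
`S(ρ|σ) ≤ D(P_ρ|P_σ) * (n-1) + log₂ n`, where `S(ρ|σ) = Tr(ρ log₂ ρ - ρ log₂ σ)`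
is the quantum relative entropy and `D` is the classical divergence. -/
theorem stmt12 (n : ℕ) (ρ σ : Matrix (Fin n) (Fin n) ℂ)
    (hρ : ρ.PosSemidef) (hρ1 : ρ.trace = 1)
    (hσ : σ.PosDef) (hσ1 : σ.trace = 1)
    (Pρ Pσ : Fin n → ℝ)
    (hPρ : ∀ i, Pρ i =
      ((star (hσ.1.eigenvectorUnitary : Matrix (Fin n) (Fin n) ℂ) * ρ *
        (hσ.1.eigenvectorUnitary : Matrix (Fin n) (Fin n) ℂ)) i i).re)
    (hPσ : ∀ i, Pσ i = hσ.1.eigenvalues i) :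
    ((ρ * matLogb ρ hρ.1 - ρ * matLogb σ hσ.1).trace).re ≤
      (⨆ S : Finset (Fin n),
        (∑ i ∈ S, Pρ i) * Real.logb 2 ((∑ i ∈ S, Pρ i) / (∑ i ∈ S, Pσ i))) *
        ((n : ℝ) - 1) + Real.logb 2 n := by
  have hPρ0 : 0 ≤ Pρ := fun i => hPρ i ▸ hρ.re_diag_star_mul_mul_nonneg _ i
  have hPρ1 : ∑ i, Pρ i = 1 := by
    simp only [hPρ, Matrix.sum_re_diag_star_mul_mul ρ hσ.1.eigenvectorUnitary.2, hρ1,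
      Complex.one_re]
  have hPσ0 : ∀ i, 0 < Pσ i := fun i => hPσ i ▸ hσ.eigenvalues_pos i
  have hPσ1 : ∑ i, Pσ i = 1 := by
    simp only [hPσ, hσ.1.sum_eigenvalues_eq_re_trace, hσ1, Complex.one_re]
  have hentropy : (ρ * matLogb ρ hρ.1).trace.re ≤ 0 := by
    rw [re_trace_mul_matLogb_self]
    exact sum_mul_logb_self_nonpos hρ.eigenvalues_nonneg
      (by rw [hρ.1.sum_eigenvalues_eq_re_trace, hρ1, Complex.one_re])
  have hcross : (ρ * matLogb σ hσ.1).trace.re = ∑ i, Pρ i * logb 2 (Pσ i) := by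
    simp only [re_trace_mul_matLogb, hPρ, hPσ]
  calc (ρ * matLogb ρ hρ.1 - ρ * matLogb σ hσ.1).trace.re
      ≤ -∑ i, Pρ i * logb 2 (Pσ i) := by rw [Matrix.trace_sub, Complex.sub_re, hcross]; linarith
    _ ≤ classicalDivergence Pρ Pσ * (n - 1) + logb 2 n := by
      simpa using neg_sum_mul_logb_le_classicalDivergence_mul_add hPρ0 hPρ1 hPσ0 hPσ1
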